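/- arXiv:1907.09253 — 5 statements merged into one kernel-verified Lean document; each statement's English description precedes it below -/
import Mathlib

section
/- If f is a general monotone function on (0,∞), then for any real γ, the function x ↦ x^γ f(x) is also general monotone (possibly with different constants C, λ). -/
open MeasureTheory Set Filter

/-- A function `f : (0,∞) → ℂ` (defined on all of `ℝ`) is general monotone with
constants `C > 0` and `λ > 1`: it is locally of bounded variation on `(0,∞)` and
`∫_x^{2x} |df| ≤ C ∫_{x/λ}^{λx} |f(t)|/t dt` for all `x > 0`. -/
def IsGM (C l : ℝ) (f : ℝ → ℂ) : Prop :=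
  (∀ a b : ℝ, 0 < a → eVariationOn f (Set.Icc a b) ≠ ⊤) ∧
  ∀ x : ℝ, 0 < x →
    eVariationOn f (Set.Icc x (2 * x)) ≤
      ENNReal.ofReal (C * ∫ t in Set.Ioo (x / l) (l * x), ‖f t‖ / t)

open scoped ENNReal NNReal

lemma evar_mul_le (u v : ℝ → ℂ) (s : Set ℝ) (Mu Mv : ℝ≥0∞)
    (hu : ∀ t ∈ s, (‖u t‖₊ : ℝ≥0∞) ≤ Mu) (hv : ∀ t ∈ s, (‖v t‖₊ : ℝ≥0∞) ≤ Mv) :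
    eVariationOn (fun t => u t * v t) s ≤ Mu * eVariationOn v s + Mv * eVariationOn u s := by
  refine iSup_le ?_
  rintro ⟨n, ⟨w, hw, ws⟩⟩
  have key : ∀ i, edist (u (w (i+1)) * v (w (i+1))) (u (w i) * v (w i)) ≤
      Mu * edist (v (w (i+1))) (v (w i)) + Mv * edist (u (w (i+1))) (u (w i)) := by
    intro i
    have h1 := edist_triangle (u (w (i+1)) * v (w (i+1))) (u (w (i+1)) * v (w i))
      (u (w i) * v (w i))
    have h2 : edist (u (w (i+1)) * v (w (i+1))) (u (w (i+1)) * v (w i)) =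
        (‖u (w (i+1))‖₊ : ℝ≥0∞) * edist (v (w (i+1))) (v (w i)) := by
      rw [edist_nndist, edist_nndist, nndist_eq_nnnorm, nndist_eq_nnnorm, ← mul_sub,
        nnnorm_mul, ENNReal.coe_mul]
    have h3 : edist (u (w (i+1)) * v (w i)) (u (w i) * v (w i)) =
        (‖v (w i)‖₊ : ℝ≥0∞) * edist (u (w (i+1))) (u (w i)) := by
      rw [edist_nndist, edist_nndist, nndist_eq_nnnorm, nndist_eq_nnnorm, ← sub_mul,
        nnnorm_mul, ENNReal.coe_mul, mul_comm]
    refine h1.trans ?_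
    rw [h2, h3]
    exact add_le_add (mul_le_mul_left (hu _ (ws _)) _) (mul_le_mul_left (hv _ (ws _)) _)
  calc ∑ i ∈ Finset.range n, edist ((fun t => u t * v t) (w (i+1))) ((fun t => u t * v t) (w i))
      ≤ ∑ i ∈ Finset.range n, (Mu * edist (v (w (i+1))) (v (w i)) +
        Mv * edist (u (w (i+1))) (u (w i))) := Finset.sum_le_sum fun i _ => key i
    _ = Mu * ∑ i ∈ Finset.range n, edist (v (w (i+1))) (v (w i)) +
        Mv * ∑ i ∈ Finset.range n, edist (u (w (i+1))) (u (w i)) := by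
        rw [Finset.sum_add_distrib, Finset.mul_sum, Finset.mul_sum]
    _ ≤ _ := add_le_add (mul_le_mul_right (eVariationOn.sum_le (f := v) (n := n) hw ws) _)
        (mul_le_mul_right (eVariationOn.sum_le (f := u) (n := n) hw ws) _)

lemma evar_ofReal (r : ℝ → ℝ) (s : Set ℝ) :
    eVariationOn (fun t => ((r t : ℝ) : ℂ)) s = eVariationOn r s := by
  unfold eVariationOn
  refine iSup_congr fun p => Finset.sum_congr rfl fun i _ => ?_
  exact Complex.isometry_ofReal.edist_eq _ _

lemma evar_neg (r : ℝ → ℝ) (s : Set ℝ) :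
    eVariationOn (fun t => -(r t)) s = eVariationOn r s := by
  unfold eVariationOn
  refine iSup_congr fun p => Finset.sum_congr rfl fun i _ => ?_
  exact edist_neg_neg _ _

lemma rpow_bounds (γ : ℝ) {a b t : ℝ} (ha : 0 < a) (ht : t ∈ Icc a b) :
    min (a ^ γ) (b ^ γ) ≤ t ^ γ ∧ t ^ γ ≤ max (a ^ γ) (b ^ γ) := by
  have ht0 : 0 < t := lt_of_lt_of_le ha ht.1
  rcases le_or_gt 0 γ with hγ | hγ
  · exact ⟨(min_le_left _ _).trans (Real.rpow_le_rpow ha.le ht.1 hγ),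
      (Real.rpow_le_rpow ht0.le ht.2 hγ).trans (le_max_right _ _)⟩
  · exact ⟨(min_le_right _ _).trans (Real.rpow_le_rpow_of_nonpos ht0 ht.2 hγ.le),
      (Real.rpow_le_rpow_of_nonpos ha ht.1 hγ.le).trans (le_max_left _ _)⟩

lemma evar_rpow (γ : ℝ) {a b : ℝ} (ha : 0 < a) (hab : a ≤ b) :
    eVariationOn (fun t : ℝ => ((t ^ γ : ℝ) : ℂ)) (Icc a b) ≤
      ENNReal.ofReal (max (a ^ γ) (b ^ γ)) := by
  rw [evar_ofReal]
  have hb : 0 < b := lt_of_lt_of_le ha hab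
  have hpa : 0 < a ^ γ := Real.rpow_pos_of_pos ha γ
  have hpb : 0 < b ^ γ := Real.rpow_pos_of_pos hb γ
  rcases le_or_gt 0 γ with hγ | hγ
  · have hmono : MonotoneOn (fun t : ℝ => t ^ γ) (Icc a b) := fun s hs t ht hst =>
      Real.rpow_le_rpow (le_trans ha.le hs.1) hst hγ
    have h := hmono.eVariationOn_le (a := a) (b := b) ⟨le_refl a, hab⟩ ⟨hab, le_refl b⟩
    rw [inter_self] at h
    refine h.trans (ENNReal.ofReal_le_ofReal ?_)
    have := le_max_right (a ^ γ) (b ^ γ)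
    linarith
  · have hmono : MonotoneOn (fun t : ℝ => -(t ^ γ)) (Icc a b) := by
      intro s hs t ht hst
      simp only [neg_le_neg_iff]
      exact Real.rpow_le_rpow_of_nonpos (lt_of_lt_of_le ha hs.1) hst hγ.le
    have h := hmono.eVariationOn_le (a := a) (b := b) ⟨le_refl a, hab⟩ ⟨hab, le_refl b⟩
    rw [inter_self] at h
    rw [← evar_neg (fun t : ℝ => t ^ γ) (Icc a b)]
    refine h.trans (ENNReal.ofReal_le_ofReal ?_)
    have := le_max_left (a ^ γ) (b ^ γ)
    linarith

lemma norm_le_of_bv {f : ℝ → ℂ} {a b : ℝ} (hab : a ≤ b)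
    (hfin : eVariationOn f (Icc a b) ≠ ⊤) {t : ℝ} (ht : t ∈ Icc a b) :
    ‖f t‖ ≤ ‖f a‖ + (eVariationOn f (Icc a b)).toReal := by
  have h1 : edist (f t) (f a) ≤ eVariationOn f (Icc a b) :=
    eVariationOn.edist_le f ht ⟨le_refl a, hab⟩
  have h2 : dist (f t) (f a) ≤ (eVariationOn f (Icc a b)).toReal := by
    rw [dist_edist]; exact ENNReal.toReal_mono hfin h1
  have h3 := norm_sub_norm_le (f t) (f a)
  rw [← dist_eq_norm] at h3
  linarith

lemma f_aemeas {f : ℝ → ℂ} (h : ∀ a b : ℝ, 0 < a → eVariationOn f (Set.Icc a b) ≠ ⊤) :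
    AEMeasurable f (volume.restrict (Ioi (0:ℝ))) := by
  have hlbv : LocallyBoundedVariationOn f (Ioi 0) := by
    intro a b ha _
    have hle : eVariationOn f (Ioi 0 ∩ Icc a b) ≤ eVariationOn f (Icc a b) :=
      eVariationOn.mono f inter_subset_right
    exact ne_top_of_le_ne_top (h a b ha) hle
  have hre : LocallyBoundedVariationOn (fun t => (f t).re) (Ioi 0) :=
    Complex.reCLM.lipschitz.comp_locallyBoundedVariationOn hlbv
  have him : LocallyBoundedVariationOn (fun t => (f t).im) (Ioi 0) :=
    Complex.imCLM.lipschitz.comp_locallyBoundedVariationOn hlbv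
  obtain ⟨p, q, hp, hq, hpq⟩ := hre.exists_monotoneOn_sub_monotoneOn
  obtain ⟨p', q', hp', hq', hpq'⟩ := him.exists_monotoneOn_sub_monotoneOn
  have mre : AEMeasurable (fun t => (f t).re) (volume.restrict (Ioi (0:ℝ))) := by
    rw [hpq]
    exact (aemeasurable_restrict_of_monotoneOn measurableSet_Ioi hp).sub
      (aemeasurable_restrict_of_monotoneOn measurableSet_Ioi hq)
  have mim : AEMeasurable (fun t => (f t).im) (volume.restrict (Ioi (0:ℝ))) := by
    rw [hpq']
    exact (aemeasurable_restrict_of_monotoneOn measurableSet_Ioi hp').sub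
      (aemeasurable_restrict_of_monotoneOn measurableSet_Ioi hq')
  have hfe : f = fun t => (((f t).re : ℝ) : ℂ) + ((f t).im : ℝ) * Complex.I := by
    funext t; rw [Complex.re_add_im]
  rw [hfe]
  exact (Complex.measurable_ofReal.comp_aemeasurable mre).add
    ((Complex.measurable_ofReal.comp_aemeasurable mim).mul_const Complex.I)

lemma integrableOn_Ioo_of_bounded {h : ℝ → ℝ} {a b K : ℝ}
    (hm : AEStronglyMeasurable h (volume.restrict (Ioo a b)))
    (hb : ∀ t ∈ Ioo a b, ‖h t‖ ≤ K) : IntegrableOn h (Ioo a b) := by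
  refine ⟨hm, HasFiniteIntegral.restrict_of_bounded (C := K) measure_Ioo_lt_top ?_⟩
  exact (ae_restrict_iff' measurableSet_Ioo).mpr (ae_of_all _ hb)

lemma integrableOn_norm_div {f : ℝ → ℂ}
    (hmeas : AEMeasurable f (volume.restrict (Ioi (0:ℝ))))
    {a b K : ℝ} (ha : 0 < a) (hK : ∀ t ∈ Ioo a b, ‖f t‖ ≤ K) :
    IntegrableOn (fun t => ‖f t‖ / t) (Ioo a b) := by
  have hsub : Ioo a b ⊆ Ioi (0:ℝ) := fun t ht => lt_trans ha ht.1
  have hmeas' : AEMeasurable f (volume.restrict (Ioo a b)) :=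
    hmeas.mono_measure (Measure.restrict_mono hsub le_rfl)
  have hm : AEMeasurable (fun t => ‖f t‖ / t) (volume.restrict (Ioo a b)) :=
    hmeas'.norm.div aemeasurable_id
  refine integrableOn_Ioo_of_bounded hm.aestronglyMeasurable (K := K / a) ?_
  intro t ht
  have ht0 : 0 < t := lt_trans ha ht.1
  have h1 : ‖f t‖ / t ≤ K / a :=
    div_le_div₀ ((norm_nonneg _).trans (hK t ht)) (hK t ht) ha ht.1.le
  have h2 : 0 ≤ ‖f t‖ / t := div_nonneg (norm_nonneg _) ht0.le
  rw [Real.norm_eq_abs, abs_of_nonneg h2]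
  exact h1

lemma integral_const_div_Ioo (x c : ℝ) (hx : 0 < x) :
    ∫ t in Ioo x (2*x), c / t = c * Real.log 2 := by
  have hx2 : x ≤ 2*x := by linarith
  rw [← integral_Ioc_eq_integral_Ioo, ← intervalIntegral.integral_of_le hx2]
  simp_rw [div_eq_mul_inv c]
  rw [intervalIntegral.integral_const_mul, integral_inv (by
    refine notMem_uIcc_of_lt hx (by linarith))]
  rw [mul_div_assoc, div_self hx.ne', mul_one]

lemma sup_bound {f : ℝ → ℂ} (hmeas : AEMeasurable f (volume.restrict (Ioi (0:ℝ))))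
    {x : ℝ} (hx : 0 < x) (hfin : eVariationOn f (Icc x (2*x)) ≠ ⊤)
    {t : ℝ} (ht : t ∈ Icc x (2*x)) :
    ‖f t‖ ≤ (eVariationOn f (Icc x (2*x))).toReal
      + (∫ s in Ioo x (2*x), ‖f s‖ / s) / Real.log 2 := by
  set V := (eVariationOn f (Icc x (2*x))).toReal with hVdef
  have hlog : 0 < Real.log 2 := Real.log_pos one_lt_two
  have hx2 : x ≤ 2*x := by linarith
  have hK : ∀ s ∈ Ioo x (2*x), ‖f s‖ ≤ ‖f x‖ + V := fun s hs =>
    norm_le_of_bv hx2 hfin ⟨hs.1.le, hs.2.le⟩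
  have hint : IntegrableOn (fun s => ‖f s‖ / s) (Ioo x (2*x)) :=
    integrableOn_norm_div hmeas hx hK
  have hint2 : IntegrableOn (fun s => (‖f t‖ - V) / s) (Ioo x (2*x)) := by
    refine integrableOn_Ioo_of_bounded (K := |‖f t‖ - V| / x)
      ((aemeasurable_const.div aemeasurable_id).aestronglyMeasurable) ?_
    intro s hs
    have hs0 : 0 < s := lt_trans hx hs.1
    rw [Real.norm_eq_abs, abs_div, abs_of_pos hs0]
    gcongr
    exact hs.1.le
  have hpt : ∀ s ∈ Ioo x (2*x), (‖f t‖ - V) / s ≤ ‖f s‖ / s := by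
    intro s hs
    have hs0 : 0 < s := lt_trans hx hs.1
    have hd : dist (f t) (f s) ≤ V := by
      rw [dist_edist]
      exact ENNReal.toReal_mono hfin (eVariationOn.edist_le f ht ⟨hs.1.le, hs.2.le⟩)
    have h3 := norm_sub_norm_le (f t) (f s)
    rw [← dist_eq_norm] at h3
    have hle : ‖f t‖ - V ≤ ‖f s‖ := by linarith
    gcongr
  have h2 := setIntegral_mono_on hint2 hint measurableSet_Ioo hpt
  rw [integral_const_div_Ioo x (‖f t‖ - V) hx] at h2
  have h4 : ‖f t‖ - V ≤ (∫ s in Ioo x (2*x), ‖f s‖ / s) / Real.log 2 :=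
    (le_div_iff₀ hlog).mpr h2
  linarith

lemma rpow_max_le (γ : ℝ) {l' x : ℝ} (hl' : 2 ≤ l') (hx : 0 < x) :
    max (x ^ γ) ((2*x) ^ γ) ≤ (2*l') ^ |γ| * min ((x/l') ^ γ) ((l'*x) ^ γ) := by
  have hl'0 : 0 < l' := by linarith
  have h2l' : (0:ℝ) < 2*l' := by linarith
  have hxl'0 : 0 < x / l' := div_pos hx hl'0
  have hord : x / l' ≤ l' * x := by
    calc x / l' ≤ x := div_le_self hx.le (by linarith)
    _ ≤ l' * x := le_mul_of_one_le_left hx.le (by linarith)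
  rcases le_or_gt 0 γ with hγ | hγ
  · rw [abs_of_nonneg hγ]
    rw [min_eq_left (Real.rpow_le_rpow hxl'0.le hord hγ)]
    have e0 : (2*l') ^ γ * (x/l') ^ γ = (2*x) ^ γ := by
      rw [← Real.mul_rpow h2l'.le hxl'0.le]
      congr 1
      field_simp
    rw [e0]
    exact max_le (Real.rpow_le_rpow hx.le (by linarith) hγ) le_rfl
  · rw [abs_of_neg hγ]
    rw [min_eq_right (Real.rpow_le_rpow_of_nonpos hxl'0 hord hγ.le)]
    have e1 : (2*l') ^ (-γ) * (l'*x) ^ γ = 2 ^ (-γ) * x ^ γ := by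
      rw [Real.mul_rpow (by norm_num : (0:ℝ) ≤ 2) hl'0.le, Real.mul_rpow hl'0.le hx.le,
        Real.rpow_neg hl'0.le]
      field_simp
    rw [e1]
    have h2 : (1:ℝ) ≤ 2 ^ (-γ) := by
      rw [← Real.rpow_zero 2]
      exact Real.rpow_le_rpow_of_exponent_le one_le_two (by linarith)
    have hp : 0 < x ^ γ := Real.rpow_pos_of_pos hx γ
    refine max_le ?_ ?_
    · nlinarith
    · have h5 : (2*x) ^ γ ≤ x ^ γ := Real.rpow_le_rpow_of_nonpos hx (by linarith) hγ.le
      nlinarith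

theorem stmt0 (f : ℝ → ℂ) (γ C l : ℝ) (hC : 0 < C) (hl : 1 < l)
    (hf : IsGM C l f) :
    ∃ C' l' : ℝ, 0 < C' ∧ 1 < l' ∧ IsGM C' l' (fun x => ((x ^ γ : ℝ) : ℂ) * f x) := by
  obtain ⟨hfin, hineq⟩ := hf
  have hmeas := f_aemeas hfin
  have hlog : 0 < Real.log 2 := Real.log_pos one_lt_two
  set l' : ℝ := 2 * l with hl'def
  have hl0 : 0 < l := by linarith
  have hl'2 : 2 ≤ l' := by rw [hl'def]; nlinarith
  have hl'1 : 1 < l' := by linarith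
  have hl'0 : 0 < l' := by linarith
  have hll' : l ≤ l' := by rw [hl'def]; nlinarith
  set K : ℝ := (2*l') ^ |γ| with hKdef
  have hK0 : 0 < K := Real.rpow_pos_of_pos (by linarith) _
  have hcc : 0 < 2*C + 1/Real.log 2 := by positivity
  refine ⟨K * (2*C + 1/Real.log 2), l', mul_pos hK0 hcc, hl'1, ⟨?_, ?_⟩⟩
  · -- local bounded variation
    intro a b ha
    rcases le_or_gt a b with hab | hab
    · have hufin := evar_rpow γ ha hab
      have hffin := hfin a b ha
      have hbu : ∀ t ∈ Icc a b, (‖((t ^ γ : ℝ) : ℂ)‖₊ : ℝ≥0∞) ≤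
          ENNReal.ofReal (max (a ^ γ) (b ^ γ)) := by
        intro t ht
        rw [← enorm_eq_nnnorm, ← ofReal_norm, Complex.norm_real, Real.norm_eq_abs]
        refine ENNReal.ofReal_le_ofReal ?_
        rw [abs_of_pos (Real.rpow_pos_of_pos (lt_of_lt_of_le ha ht.1) γ)]
        exact (rpow_bounds γ ha ht).2
      have hbf : ∀ t ∈ Icc a b, (‖f t‖₊ : ℝ≥0∞) ≤
          ENNReal.ofReal (‖f a‖ + (eVariationOn f (Icc a b)).toReal) := by
        intro t ht
        rw [← enorm_eq_nnnorm, ← ofReal_norm]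
        exact ENNReal.ofReal_le_ofReal (norm_le_of_bv hab hffin ht)
      have h := evar_mul_le (fun t => ((t ^ γ : ℝ) : ℂ)) f (Icc a b) _ _ hbu hbf
      refine ne_top_of_le_ne_top ?_ h
      exact ENNReal.add_ne_top.mpr ⟨ENNReal.mul_ne_top ENNReal.ofReal_ne_top hffin,
        ENNReal.mul_ne_top ENNReal.ofReal_ne_top
          (ne_top_of_le_ne_top ENNReal.ofReal_ne_top hufin)⟩
    · rw [Icc_eq_empty hab.not_ge, eVariationOn.subsingleton _ subsingleton_empty]
      exact ENNReal.zero_ne_top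
  · intro x hx
    have hx2 : x ≤ 2*x := by linarith
    have hxl' : 0 < x / l' := div_pos hx hl'0
    have hxl : 0 < x / l := div_pos hx hl0
    have hordJ : x / l' ≤ l' * x := by
      calc x / l' ≤ x := div_le_self hx.le (by linarith)
      _ ≤ l' * x := le_mul_of_one_le_left hx.le (by linarith)
    have hIsub : Icc x (2*x) ⊆ Ioo (x/l') (l'*x) := by
      intro t ht
      exact ⟨lt_of_lt_of_le (div_lt_self hx hl'1) ht.1,
        lt_of_le_of_lt ht.2 (by nlinarith)⟩
    have hDsub : Ioo (x/l) (l*x) ⊆ Ioo (x/l') (l'*x) := by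
      intro t ht
      refine ⟨lt_of_le_of_lt ?_ ht.1, lt_of_lt_of_le ht.2 ?_⟩
      · exact div_le_div_of_nonneg_left hx.le hl0 hll'
      · exact mul_le_mul_of_nonneg_right hll' hx.le
    set V := (eVariationOn f (Icc x (2*x))).toReal with hVdef
    have hfinx := hfin x (2*x) hx
    have hKf : ∀ t ∈ Ioo (x/l') (l'*x), ‖f t‖ ≤
        ‖f (x/l')‖ + (eVariationOn f (Icc (x/l') (l'*x))).toReal :=
      fun t ht => norm_le_of_bv hordJ (hfin _ _ hxl') ⟨ht.1.le, ht.2.le⟩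
    have hintB : IntegrableOn (fun t => ‖f t‖ / t) (Ioo (x/l') (l'*x)) :=
      integrableOn_norm_div hmeas hxl' hKf
    set B := ∫ s in Ioo (x/l') (l'*x), ‖f s‖ / s with hBdef
    set A := ∫ s in Ioo x (2*x), ‖f s‖ / s with hAdef
    set D := ∫ s in Ioo (x/l) (l*x), ‖f s‖ / s with hDdef
    have hnn : ∀ t ∈ Ioo (x/l') (l'*x), 0 ≤ ‖f t‖ / t :=
      fun t ht => div_nonneg (norm_nonneg _) (le_of_lt (lt_trans hxl' ht.1))
    have hB0 : 0 ≤ B := by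
      rw [hBdef]; exact setIntegral_nonneg measurableSet_Ioo hnn
    have hA0 : 0 ≤ A := by
      rw [hAdef]
      exact setIntegral_nonneg measurableSet_Ioo
        (fun t ht => div_nonneg (norm_nonneg _) (le_of_lt (lt_trans hx ht.1)))
    have hD0 : 0 ≤ D := by
      rw [hDdef]
      exact setIntegral_nonneg measurableSet_Ioo
        (fun t ht => div_nonneg (norm_nonneg _) (le_of_lt (lt_trans hxl ht.1)))
    have hnn' : 0 ≤ᵐ[volume.restrict (Ioo (x/l') (l'*x))] fun t => ‖f t‖ / t :=
      (ae_restrict_iff' measurableSet_Ioo).mpr (ae_of_all _ hnn)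
    have hAB : A ≤ B := by
      rw [hAdef, hBdef]
      exact setIntegral_mono_set hintB hnn'
        (HasSubset.Subset.eventuallyLE (Ioo_subset_Icc_self.trans hIsub))
    have hDB : D ≤ B := by
      rw [hDdef, hBdef]
      exact setIntegral_mono_set hintB hnn' (HasSubset.Subset.eventuallyLE hDsub)
    have hVD : V ≤ C * D := by
      rw [hVdef, hDdef]
      exact ENNReal.toReal_le_of_le_ofReal
        (mul_nonneg hC.le (by rw [hDdef] at hD0; exact hD0)) (hineq x hx)
    have hV0 : 0 ≤ V := by rw [hVdef]; exact ENNReal.toReal_nonneg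
    have hMf : ∀ t ∈ Icc x (2*x), ‖f t‖ ≤ V + A / Real.log 2 := by
      intro t ht
      have := sup_bound hmeas hx hfinx ht
      rw [← hVdef, ← hAdef] at this
      exact this
    set Mu := max (x ^ γ) ((2*x) ^ γ) with hMudef
    have hMu0 : 0 < Mu := lt_max_iff.mpr (Or.inl (Real.rpow_pos_of_pos hx γ))
    have hbu : ∀ t ∈ Icc x (2*x), (‖((t ^ γ : ℝ) : ℂ)‖₊ : ℝ≥0∞) ≤ ENNReal.ofReal Mu := by
      intro t ht
      rw [← enorm_eq_nnnorm, ← ofReal_norm, Complex.norm_real, Real.norm_eq_abs]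
      refine ENNReal.ofReal_le_ofReal ?_
      rw [abs_of_pos (Real.rpow_pos_of_pos (lt_of_lt_of_le hx ht.1) γ)]
      exact (rpow_bounds γ hx ht).2
    have hbf : ∀ t ∈ Icc x (2*x), (‖f t‖₊ : ℝ≥0∞) ≤
        ENNReal.ofReal (V + A / Real.log 2) := by
      intro t ht
      rw [← enorm_eq_nnnorm, ← ofReal_norm]
      exact ENNReal.ofReal_le_ofReal (hMf t ht)
    have hvar1 := evar_mul_le (fun t => ((t ^ γ : ℝ) : ℂ)) f (Icc x (2*x)) _ _ hbu hbf
    have hvar2 : eVariationOn (fun t => ((t ^ γ : ℝ) : ℂ) * f t) (Icc x (2*x)) ≤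
        ENNReal.ofReal Mu * ENNReal.ofReal (C*D) +
        ENNReal.ofReal (V + A / Real.log 2) * ENNReal.ofReal Mu := by
      refine hvar1.trans (add_le_add (mul_le_mul_right ?_ _) (mul_le_mul_right ?_ _))
      · rw [hDdef]; exact hineq x hx
      · exact evar_rpow γ hx hx2
    have hnn2 : 0 ≤ V + A / Real.log 2 := add_nonneg hV0 (div_nonneg hA0 hlog.le)
    have hreal : Mu * (C*D) + (V + A / Real.log 2) * Mu ≤
        Mu * ((2*C + 1/Real.log 2) * B) := by
      have h1 : C*D ≤ C*B := mul_le_mul_of_nonneg_left hDB hC.le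
      have h2 : A / Real.log 2 ≤ B / Real.log 2 := by gcongr
      have e : (2*C + 1/Real.log 2) * B = C*B + C*B + B / Real.log 2 := by ring
      have h3 : C*D + (V + A / Real.log 2) ≤ (2*C + 1/Real.log 2) * B := by
        rw [e]; linarith
      calc Mu * (C*D) + (V + A / Real.log 2) * Mu
          = Mu * (C*D + (V + A / Real.log 2)) := by ring
        _ ≤ Mu * ((2*C + 1/Real.log 2) * B) := mul_le_mul_of_nonneg_left h3 hMu0.le
    have hvar3 : eVariationOn (fun t => ((t ^ γ : ℝ) : ℂ) * f t) (Icc x (2*x)) ≤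
        ENNReal.ofReal (Mu * ((2*C + 1/Real.log 2) * B)) := by
      refine hvar2.trans ?_
      rw [← ENNReal.ofReal_mul hMu0.le, ← ENNReal.ofReal_mul hnn2,
        ← ENNReal.ofReal_add (mul_nonneg hMu0.le (mul_nonneg hC.le hD0)) (mul_nonneg hnn2 hMu0.le)]
      exact ENNReal.ofReal_le_ofReal hreal
    -- lower bound for the integral of the new function
    set m := min ((x/l') ^ γ) ((l'*x) ^ γ) with hmdef
    have hm0 : 0 < m := lt_min (Real.rpow_pos_of_pos hxl' γ)
      (Real.rpow_pos_of_pos (by nlinarith) γ)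
    have hmeasg : AEMeasurable (fun t : ℝ => ((t ^ γ : ℝ) : ℂ) * f t)
        (volume.restrict (Ioi (0:ℝ))) := by
      have hcont : ContinuousOn (fun t : ℝ => t ^ γ) (Ioi 0) := fun t ht =>
        (Real.continuousAt_rpow_const t γ (Or.inl (ne_of_gt ht))).continuousWithinAt
      exact ((Complex.continuous_ofReal.comp_continuousOn hcont).aemeasurable
        measurableSet_Ioi).mul hmeas
    have hKg : ∀ t ∈ Ioo (x/l') (l'*x), ‖((t ^ γ : ℝ) : ℂ) * f t‖ ≤
        max ((x/l') ^ γ) ((l'*x) ^ γ) *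
          (‖f (x/l')‖ + (eVariationOn f (Icc (x/l') (l'*x))).toReal) := by
      intro t ht
      have ht0 : 0 < t := lt_trans hxl' ht.1
      rw [norm_mul, Complex.norm_real, Real.norm_eq_abs,
        abs_of_pos (Real.rpow_pos_of_pos ht0 γ)]
      exact mul_le_mul (rpow_bounds γ hxl' ⟨ht.1.le, ht.2.le⟩).2 (hKf t ht)
        (norm_nonneg _) ((Real.rpow_pos_of_pos hxl' γ).le.trans (le_max_left _ _))
    have hintG : IntegrableOn (fun t => ‖((t ^ γ : ℝ) : ℂ) * f t‖ / t)
        (Ioo (x/l') (l'*x)) := integrableOn_norm_div hmeasg hxl' hKg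
    have hintmB : IntegrableOn (fun t => m * (‖f t‖ / t)) (Ioo (x/l') (l'*x)) :=
      hintB.const_mul m
    have hptg : ∀ t ∈ Ioo (x/l') (l'*x),
        m * (‖f t‖ / t) ≤ ‖((t ^ γ : ℝ) : ℂ) * f t‖ / t := by
      intro t ht
      have ht0 : 0 < t := lt_trans hxl' ht.1
      rw [norm_mul, Complex.norm_real, Real.norm_eq_abs,
        abs_of_pos (Real.rpow_pos_of_pos ht0 γ), mul_div_assoc]
      exact mul_le_mul_of_nonneg_right (rpow_bounds γ hxl' ⟨ht.1.le, ht.2.le⟩).1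
        (div_nonneg (norm_nonneg _) ht0.le)
    have hlow : m * B ≤ ∫ t in Ioo (x/l') (l'*x), ‖((t ^ γ : ℝ) : ℂ) * f t‖ / t := by
      have h := setIntegral_mono_on hintmB hintG measurableSet_Ioo hptg
      rw [integral_const_mul] at h
      rw [hBdef]
      exact h
    refine hvar3.trans (ENNReal.ofReal_le_ofReal ?_)
    calc Mu * ((2*C + 1/Real.log 2) * B)
        ≤ (K * m) * ((2*C + 1/Real.log 2) * B) := by
          refine mul_le_mul_of_nonneg_right ?_ (mul_nonneg hcc.le hB0)
          rw [hMudef, hKdef, hmdef]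
          exact rpow_max_le γ hl'2 hx
      _ = (K * (2*C + 1/Real.log 2)) * (m * B) := by ring
      _ ≤ (K * (2*C + 1/Real.log 2)) *
          ∫ t in Ioo (x/l') (l'*x), ‖((t ^ γ : ℝ) : ℂ) * f t‖ / t :=
          mul_le_mul_of_nonneg_left hlow (mul_nonneg hK0.le hcc.le)
end

section
/- If f is a general monotone function with constants C and λ, then for any t > 0 and any u ∈ [t, 2t], one has |f(u)| ≤ C' ∫_{t/λ}^{λt} |f(x)|/x dx, where C' depends only on C and λ. -/
open MeasureTheory Set Filter

lemma lip_re : LipschitzWith 1 Complex.re :=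
  LipschitzWith.of_dist_le_mul fun x y => by
    rw [Real.dist_eq, Complex.dist_eq, ← Complex.sub_re, NNReal.coe_one, one_mul]
    exact Complex.abs_re_le_norm _

lemma lip_im : LipschitzWith 1 Complex.im :=
  LipschitzWith.of_dist_le_mul fun x y => by
    rw [Real.dist_eq, Complex.dist_eq, ← Complex.sub_im, NNReal.coe_one, one_mul]
    exact Complex.abs_im_le_norm _

lemma bv_aemeasurable (f : ℝ → ℂ) {a b : ℝ}
    (h : BoundedVariationOn f (Set.Icc a b)) :
    AEMeasurable f (volume.restrict (Set.Ioo a b)) := by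
  have hre : BoundedVariationOn (fun x => (f x).re) (Set.Icc a b) :=
    lip_re.comp_boundedVariationOn h
  have him : BoundedVariationOn (fun x => (f x).im) (Set.Icc a b) :=
    lip_im.comp_boundedVariationOn h
  obtain ⟨p, q, hp, hq, hpq⟩ := hre.locallyBoundedVariationOn.exists_monotoneOn_sub_monotoneOn
  obtain ⟨r, s, hr, hs, hrs⟩ := him.locallyBoundedVariationOn.exists_monotoneOn_sub_monotoneOn
  have hsub : Set.Ioo a b ⊆ Set.Icc a b := Set.Ioo_subset_Icc_self
  have mp : AEMeasurable p (volume.restrict (Set.Ioo a b)) :=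
    aemeasurable_restrict_of_monotoneOn measurableSet_Ioo (hp.mono hsub)
  have mq : AEMeasurable q (volume.restrict (Set.Ioo a b)) :=
    aemeasurable_restrict_of_monotoneOn measurableSet_Ioo (hq.mono hsub)
  have mr : AEMeasurable r (volume.restrict (Set.Ioo a b)) :=
    aemeasurable_restrict_of_monotoneOn measurableSet_Ioo (hr.mono hsub)
  have ms : AEMeasurable s (volume.restrict (Set.Ioo a b)) :=
    aemeasurable_restrict_of_monotoneOn measurableSet_Ioo (hs.mono hsub)
  have mre : AEMeasurable (fun x => (f x).re) (volume.restrict (Set.Ioo a b)) := by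
    have : (fun x => (f x).re) = p - q := hpq
    rw [this]; exact mp.sub mq
  have mim : AEMeasurable (fun x => (f x).im) (volume.restrict (Set.Ioo a b)) := by
    have : (fun x => (f x).im) = r - s := hrs
    rw [this]; exact mr.sub ms
  have : AEMeasurable (fun x => ((f x).re : ℂ) + (f x).im * Complex.I)
      (volume.restrict (Set.Ioo a b)) :=
    ((Complex.measurable_ofReal.comp_aemeasurable mre).add
      ((Complex.measurable_ofReal.comp_aemeasurable mim).mul_const _))
  simpa [Complex.re_add_im] using this

theorem stmt1 (f : ℝ → ℂ) (C l : ℝ) (hC : 0 < C) (hl : 1 < l) (hf : IsGM C l f) :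
    ∃ C' : ℝ, 0 < C' ∧ ∀ t : ℝ, 0 < t → ∀ u ∈ Set.Icc t (2 * t),
      ‖f u‖ ≤ C' * ∫ x in Set.Ioo (t / l) (l * t), ‖f x‖ / x := by
  obtain ⟨hfin, hGM⟩ := hf
  set L : ℝ := min l 2 with hLdef
  have hL1 : 1 < L := lt_min hl one_lt_two
  have hLl : L ≤ l := min_le_left _ _
  have hL2 : L ≤ 2 := min_le_right _ _
  have hL0 : (0:ℝ) < L - 1 := by linarith
  set q : ℝ := L / (L - 1) with hqdef
  have hq0 : 0 < q := div_pos (by linarith) hL0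
  have hqL : q * (L - 1) = L := div_mul_cancel₀ _ (ne_of_gt hL0)
  refine ⟨C + q, by positivity, ?_⟩
  intro t ht u hu
  set a : ℝ := t / l with hadef
  set b : ℝ := l * t with hbdef
  have hl0 : (0:ℝ) < l := by linarith
  have ha : 0 < a := div_pos ht hl0
  have hat : a < t := div_lt_self ht hl
  have htb : t < b := by rw [hbdef]; nlinarith
  have hab : a < b := hat.trans htb
  have hLtb : L * t ≤ b := by rw [hbdef]; nlinarith
  have hbv : BoundedVariationOn f (Set.Icc a b) := hfin a b ha
  have hmeas : AEMeasurable f (volume.restrict (Set.Ioo a b)) := bv_aemeasurable f hbv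
  set g : ℝ → ℝ := fun x => ‖f x‖ / x with hgdef
  set V2 : ℝ := (eVariationOn f (Set.Icc a b)).toReal with hV2def
  set M : ℝ := ‖f a‖ + V2 with hMdef
  have hbound : ∀ x ∈ Set.Ioo a b, g x ≤ M / a := by
    intro x hx
    have hxa : a ≤ x := hx.1.le
    have hxI : x ∈ Set.Icc a b := Set.Ioo_subset_Icc_self hx
    have haI : a ∈ Set.Icc a b := Set.left_mem_Icc.2 hab.le
    have hd : dist (f x) (f a) ≤ V2 := hbv.dist_le hxI haI
    have hn : ‖f x‖ ≤ M := by
      have := norm_sub_norm_le (f x) (f a)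
      rw [← dist_eq_norm] at this
      rw [hMdef]; linarith
    exact div_le_div₀ (by positivity) hn ha hxa
  have hgm : AEStronglyMeasurable g (volume.restrict (Set.Ioo a b)) :=
    (hmeas.norm.div aemeasurable_id).aestronglyMeasurable
  have hint : IntegrableOn g (Set.Ioo a b) volume := by
    refine Integrable.mono' (g := fun _ => M / a)
      (integrableOn_const measure_Ioo_lt_top.ne) hgm ?_
    filter_upwards [ae_restrict_mem measurableSet_Ioo] with x hx
    have h0 : 0 ≤ g x := div_nonneg (norm_nonneg _) (ha.trans hx.1).le
    rw [Real.norm_eq_abs, abs_of_nonneg h0]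
    exact hbound x hx
  set I : ℝ := ∫ x in Set.Ioo a b, g x with hIdef
  have hI0 : 0 ≤ I := by
    refine setIntegral_nonneg measurableSet_Ioo fun x hx => ?_
    exact div_nonneg (norm_nonneg _) (ha.trans hx.1).le
  set V : ℝ := (eVariationOn f (Set.Icc t (2 * t))).toReal with hVdef
  have hVI : V ≤ C * I := by
    have h1 := hGM t ht
    have h2 : V ≤ (ENNReal.ofReal (C * I)).toReal :=
      ENNReal.toReal_mono ENNReal.ofReal_ne_top h1
    rwa [ENNReal.toReal_ofReal (by positivity)] at h2
  have hbvt : BoundedVariationOn f (Set.Icc t (2 * t)) := hfin t (2 * t) ht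
  have hclaim : ∀ v ∈ Set.Ioo t (L * t), ‖f u‖ - V ≤ ‖f v‖ := by
    intro v hv
    have hvI : v ∈ Set.Icc t (2 * t) := ⟨hv.1.le, hv.2.le.trans (by nlinarith)⟩
    have hd : dist (f u) (f v) ≤ V := hbvt.dist_le hu hvI
    have := norm_sub_norm_le (f u) (f v)
    rw [← dist_eq_norm] at this
    linarith
  by_cases hcase : ‖f u‖ ≤ V
  · nlinarith [mul_nonneg hq0.le hI0]
  · push_neg at hcase
    set D : ℝ := ‖f u‖ - V with hDdef
    have hD0 : 0 ≤ D := by linarith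
    have hsub : Set.Ioo t (L * t) ⊆ Set.Ioo a b := fun x hx => ⟨hat.trans hx.1, hx.2.trans_le hLtb⟩
    have hLt0 : 0 < L * t := by positivity
    have hintsm : IntegrableOn g (Set.Ioo t (L * t)) volume := hint.mono_set hsub
    have hlow : D / (L * t) * (volume (Set.Ioo t (L * t))).toReal
        ≤ ∫ x in Set.Ioo t (L * t), g x := by
      refine setIntegral_ge_of_const_le_real measurableSet_Ioo (measure_Ioo_lt_top).ne ?_ hintsm
      intro v hv
      have hv0 : 0 < v := ht.trans hv.1
      exact div_le_div₀ (norm_nonneg _) (hclaim v hv) hv0 hv.2.le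
    have hvol : (volume (Set.Ioo t (L * t))).toReal = L * t - t := by
      rw [Real.volume_Ioo, ENNReal.toReal_ofReal (by nlinarith)]
    have hmono : (∫ x in Set.Ioo t (L * t), g x) ≤ I := by
      refine setIntegral_mono_set hint ?_ (HasSubset.Subset.eventuallyLE hsub)
      filter_upwards [ae_restrict_mem measurableSet_Ioo] with x hx
      exact div_nonneg (norm_nonneg _) (ha.trans hx.1).le
    rw [hvol] at hlow
    have hkey : D / (L * t) * (L * t - t) ≤ I := hlow.trans hmono
    rw [div_mul_eq_mul_div, div_le_iff₀ hLt0] at hkey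
    -- hkey : D * (L * t - t) ≤ I * (L * t)
    have hDq : D ≤ q * I := by
      rw [hqdef, div_mul_eq_mul_div, le_div_iff₀ hL0]
      nlinarith [hkey, ht]
    rw [add_mul]
    linarith [hDq, hVI]
end

section
/- If f is a general monotone function that is Lebesgue integrable on (0, ε) for some ε > 0, then x·f(x) → 0 as x → 0⁺. -/
set_option maxHeartbeats 1000000
open MeasureTheory Set Filter
open scoped ENNReal NNReal

theorem stmt3 (f : ℝ → ℂ) (C l : ℝ) (hC : 0 < C) (hl : 1 < l) (hf : IsGM C l f)
    (ε : ℝ) (hε : 0 < ε) (hint : IntegrableOn f (Set.Ioo 0 ε)) :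
    Tendsto (fun x : ℝ => (x : ℂ) * f x) (nhdsWithin 0 (Set.Ioi 0)) (nhds 0) := by
  have hl0 : (0:ℝ) < l := lt_trans one_pos hl
  have hl2 : (0:ℝ) < l + 2 := by linarith
  set F : ℝ → ℝ := fun y => ∫ t in Ioc 0 y, ‖f t‖ with hF
  -- integrability of ‖f‖ on Icc 0 (ε/2)
  have hnorm : IntegrableOn (fun t => ‖f t‖) (Set.Ioo 0 ε) := hint.norm
  have hIcc : IntegrableOn (fun t => ‖f t‖) (Icc 0 (ε/2)) := by
    rw [integrableOn_Icc_iff_integrableOn_Ioo]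
    exact hnorm.mono_set (Ioo_subset_Ioo le_rfl (by linarith))
  have hFcont : ContinuousOn F (Icc 0 (ε/2)) := intervalIntegral.continuousOn_primitive hIcc
  have hF0 : F 0 = 0 := by simp [hF]
  -- main pointwise bound
  have key : ∀ x : ℝ, 0 < x → (l+2)*x ≤ ε/2 → ‖(x:ℂ) * f x‖ ≤ (1 + C*l) * F ((l+2)*x) := by
    intro x hx hxe
    have hxl : 0 < x / l := div_pos hx hl0
    have hlx : l * x < ε := by nlinarith
    have h2x : 2 * x < ε := by nlinarith
    have hsub1 : Ioo x (2*x) ⊆ Ioo 0 ε := Ioo_subset_Ioo (le_of_lt hx) (le_of_lt h2x)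
    have hsub2 : Ioo (x/l) (l*x) ⊆ Ioo 0 ε := Ioo_subset_Ioo (le_of_lt hxl) (le_of_lt hlx)
    have hfi1 : IntegrableOn (fun t => ‖f t‖) (Ioo x (2*x)) := hnorm.mono_set hsub1
    have hfi2 : IntegrableOn (fun t => ‖f t‖) (Ioo (x/l) (l*x)) := hnorm.mono_set hsub2
    set I : ℝ := ∫ t in Set.Ioo (x / l) (l * x), ‖f t‖ / t with hI
    have hfi3 : IntegrableOn (fun t => ‖f t‖ / t) (Ioo (x/l) (l*x)) := by
      apply Integrable.mono (hfi2.const_mul (l/x))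
      · exact ((hint.mono_set hsub2).aestronglyMeasurable.norm.aemeasurable.div
          aemeasurable_id).aestronglyMeasurable
      · filter_upwards [ae_restrict_mem measurableSet_Ioo] with t ht
        have ht0 : 0 < t := lt_trans hxl ht.1
        rw [Real.norm_eq_abs, Real.norm_eq_abs, abs_of_nonneg (div_nonneg (norm_nonneg _) ht0.le),
          abs_of_nonneg (mul_nonneg (div_nonneg hl0.le hx.le) (norm_nonneg _))]
        rw [div_le_iff₀ ht0]
        have h1 : x / l ≤ t := ht.1.le
        have : x ≤ l * t := by
          rw [div_le_iff₀ hl0] at h1; linarith [h1]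
        calc ‖f t‖ = ‖f t‖ * 1 := (mul_one _).symm
          _ ≤ (l / x * ‖f t‖) * t := by
              rw [mul_comm (l/x), mul_assoc]
              apply mul_le_mul_of_nonneg_left _ (norm_nonneg _)
              rw [div_mul_eq_mul_div, le_div_iff₀ hx]
              nlinarith
    have hIpos : 0 ≤ I := by
      apply setIntegral_nonneg measurableSet_Ioo
      intro t ht
      exact div_nonneg (norm_nonneg _) (le_of_lt (lt_trans hxl ht.1))
    have hr : 0 ≤ C * I := mul_nonneg hC.le hIpos
    -- Step A
    have stepA : ∀ t ∈ Icc x (2*x), ‖f x‖ ≤ ‖f t‖ + C * I := by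
      intro t ht
      have hx_mem : x ∈ Icc x (2*x) := ⟨le_rfl, by linarith⟩
      have hvar := (eVariationOn.edist_le f hx_mem ht).trans (hf.2 x hx)
      rw [edist_le_ofReal hr] at hvar
      have := norm_sub_norm_le (f x) (f t)
      rw [dist_eq_norm] at hvar
      linarith
    -- Step C
    have stepC : I ≤ (l / x) * ∫ t in Ioo (x/l) (l*x), ‖f t‖ := by
      rw [← integral_const_mul]
      apply setIntegral_mono_on hfi3 (hfi2.const_mul _) measurableSet_Ioo
      intro t ht
      have ht0 : 0 < t := lt_trans hxl ht.1
      rw [div_le_iff₀ ht0]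
      rw [mul_comm (l/x), mul_assoc]
      calc ‖f t‖ = ‖f t‖ * 1 := (mul_one _).symm
        _ ≤ ‖f t‖ * (l / x * t) := by
            apply mul_le_mul_of_nonneg_left _ (norm_nonneg _)
            rw [div_mul_eq_mul_div, le_div_iff₀ hx]
            have h1 : x / l ≤ t := ht.1.le
            rw [div_le_iff₀ hl0] at h1
            nlinarith
    -- Step D
    have hvol : (volume (Ioo x (2*x))).toReal = x := by
      rw [Real.volume_Ioo, ENNReal.toReal_ofReal (by linarith)]
      ring
    have stepD : x * ‖f x‖ ≤ (∫ t in Ioo x (2*x), ‖f t‖) + x * (C * I) := by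
      have h1 : ∫ _t in Ioo x (2*x), ‖f x‖ = x * ‖f x‖ := by
        rw [setIntegral_const, smul_eq_mul, measureReal_def, hvol]
      have h2 : (∫ t in Ioo x (2*x), (‖f t‖ + C * I))
          = (∫ t in Ioo x (2*x), ‖f t‖) + x * (C * I) := by
        rw [integral_add hfi1 (integrableOn_const (by
          rw [Real.volume_Ioo]; exact ENNReal.ofReal_ne_top))]
        rw [setIntegral_const, smul_eq_mul, measureReal_def, hvol]
      rw [← h1, ← h2]
      apply setIntegral_mono_on
        (integrableOn_const (by rw [Real.volume_Ioo]; exact ENNReal.ofReal_ne_top))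
        (hfi1.add (integrableOn_const (by
          rw [Real.volume_Ioo]; exact ENNReal.ofReal_ne_top))) measurableSet_Ioo
      intro t ht
      exact stepA t (Ioo_subset_Icc_self ht)
    -- bound both integrals by F ((l+2)*x)
    have hy : 0 < (l+2)*x := mul_pos hl2 hx
    have hfiy : IntegrableOn (fun t => ‖f t‖) (Ioc 0 ((l+2)*x)) := by
      apply hnorm.mono_set
      intro t ht
      exact ⟨ht.1, lt_of_le_of_lt ht.2 (by linarith)⟩
    have hnn : 0 ≤ᵐ[volume.restrict (Ioc 0 ((l+2)*x))] fun t => ‖f t‖ :=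
      Eventually.of_forall fun t => norm_nonneg _
    have hb1 : (∫ t in Ioo x (2*x), ‖f t‖) ≤ F ((l+2)*x) := by
      apply setIntegral_mono_set hfiy hnn
      apply HasSubset.Subset.eventuallyLE
      intro t ht
      exact ⟨lt_trans hx ht.1, le_of_lt (lt_of_lt_of_le ht.2 (by nlinarith))⟩
    have hb2 : (∫ t in Ioo (x/l) (l*x), ‖f t‖) ≤ F ((l+2)*x) := by
      apply setIntegral_mono_set hfiy hnn
      apply HasSubset.Subset.eventuallyLE
      intro t ht
      exact ⟨lt_trans hxl ht.1, le_of_lt (lt_of_lt_of_le ht.2 (by nlinarith))⟩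
    have hFnn : 0 ≤ F ((l+2)*x) := setIntegral_nonneg measurableSet_Ioc fun t _ => norm_nonneg _
    have : x * (C * I) ≤ C * l * F ((l+2)*x) := by
      calc x * (C * I) ≤ x * (C * ((l/x) * ∫ t in Ioo (x/l) (l*x), ‖f t‖)) := by
            apply mul_le_mul_of_nonneg_left _ hx.le
            exact mul_le_mul_of_nonneg_left stepC hC.le
        _ = C * l * ∫ t in Ioo (x/l) (l*x), ‖f t‖ := by
            field_simp
        _ ≤ C * l * F ((l+2)*x) :=
            mul_le_mul_of_nonneg_left hb2 (mul_nonneg hC.le hl0.le)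
    have hnormx : ‖(x:ℂ) * f x‖ = x * ‖f x‖ := by
      rw [norm_mul, Complex.norm_real, Real.norm_eq_abs, abs_of_pos hx]
    rw [hnormx]
    calc x * ‖f x‖ ≤ (∫ t in Ioo x (2*x), ‖f t‖) + x * (C * I) := stepD
      _ ≤ F ((l+2)*x) + C * l * F ((l+2)*x) := add_le_add hb1 this
      _ = (1 + C*l) * F ((l+2)*x) := by ring
  -- limit of F ((l+2)*x)
  have hd : (0:ℝ) < ε / (2*(l+2)) := div_pos hε (by positivity)
  have hFt : Tendsto (fun x : ℝ => F ((l+2)*x)) (nhdsWithin 0 (Set.Ioi 0)) (nhds 0) := by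
    have h1 : Tendsto (fun x : ℝ => (l+2)*x) (nhdsWithin 0 (Set.Ioi 0))
        (nhdsWithin 0 (Icc 0 (ε/2))) := by
      rw [tendsto_nhdsWithin_iff]
      constructor
      · have : Tendsto (fun x : ℝ => (l+2)*x) (nhds 0) (nhds 0) := by
          have := (continuous_const.mul continuous_id : Continuous fun x : ℝ => (l+2)*x).tendsto 0
          simpa using (continuous_mul_left (l+2)).tendsto 0
        exact this.mono_left nhdsWithin_le_nhds
      · filter_upwards [Ioo_mem_nhdsGT_of_mem (Set.left_mem_Ico.2 hd)] with x hx
        exact ⟨by nlinarith [hx.1], by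
          have := hx.2
          rw [lt_div_iff₀ (by positivity : (0:ℝ) < 2*(l+2))] at this
          nlinarith⟩
    have h2 : Tendsto F (nhdsWithin 0 (Icc 0 (ε/2))) (nhds 0) := by
      have := (hFcont 0 ⟨le_rfl, by linarith⟩).tendsto
      rwa [hF0] at this
    exact h2.comp h1
  -- squeeze
  rw [tendsto_zero_iff_norm_tendsto_zero]
  apply squeeze_zero' (Eventually.of_forall fun x => norm_nonneg _)
  · filter_upwards [Ioo_mem_nhdsGT_of_mem (Set.left_mem_Ico.2 hd)] with x hx
    apply key x hx.1
    have := hx.2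
    rw [lt_div_iff₀ (by positivity : (0:ℝ) < 2*(l+2))] at this
    nlinarith
  · simpa using hFt.const_mul (1 + C*l)
end

section
/- If f is a general monotone function that is Lebesgue integrable on (ε, ∞) for some ε > 0, then x·f(x) → 0 as x → ∞. -/
open MeasureTheory Set Filter
open scoped ENNReal NNReal

lemma tail_tendsto (g : ℝ → ℝ) (ε : ℝ) (hg : IntegrableOn g (Set.Ioi ε)) :
    Tendsto (fun a => ∫ t in Set.Ioi a, g t) atTop (nhds 0) := by
  have h1 : Tendsto (fun a => ∫ t in ε..a, g t) atTop (nhds (∫ t in Set.Ioi ε, g t)) :=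
    intervalIntegral_tendsto_integral_Ioi ε hg tendsto_id
  have h2 : Tendsto (fun a => (∫ t in Set.Ioi ε, g t) - ∫ t in ε..a, g t) atTop (nhds 0) := by
    have := (tendsto_const_nhds (x := ∫ t in Set.Ioi ε, g t) (f := atTop)).sub h1
    rwa [sub_self] at this
  apply h2.congr'
  filter_upwards [eventually_ge_atTop ε] with a ha
  have hu : Set.Ioc ε a ∪ Set.Ioi a = Set.Ioi ε := Set.Ioc_union_Ioi_eq_Ioi ha
  have hd : Disjoint (Set.Ioc ε a) (Set.Ioi a) := by
    rw [Set.disjoint_left]; rintro t ⟨_, h1⟩ h2; exact absurd h1 (not_le.2 h2)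
  have hsplit := MeasureTheory.setIntegral_union hd measurableSet_Ioi
    (hg.mono_set (by rw [← hu]; exact Set.subset_union_left))
    (hg.mono_set (by rw [← hu]; exact Set.subset_union_right))
  rw [hu] at hsplit
  rw [intervalIntegral.integral_of_le ha]
  linarith [hsplit]

set_option maxHeartbeats 1000000 in
theorem stmt4 (f : ℝ → ℂ) (C l : ℝ) (hC : 0 < C) (hl : 1 < l) (hf : IsGM C l f)
    (ε : ℝ) (hε : 0 < ε) (hint : IntegrableOn f (Set.Ioi ε)) :
    Tendsto (fun x : ℝ => (x : ℂ) * f x) atTop (nhds 0) := by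
  obtain ⟨hfin, hGM⟩ := hf
  have hl0 : (0:ℝ) < l := lt_trans one_pos hl
  have hnormint : IntegrableOn (fun t => ‖f t‖) (Set.Ioi ε) volume := hint.norm
  have htail : Tendsto (fun a => ∫ t in Set.Ioi a, ‖f t‖) atTop (nhds 0) :=
    tail_tendsto _ ε hint.norm
  have htail' : Tendsto (fun x => (1 + C*l) * ∫ t in Set.Ioi (x/l), ‖f t‖) atTop (nhds 0) := by
    have hcomp : Tendsto (fun x : ℝ => x / l) atTop atTop :=
      Tendsto.atTop_div_const hl0 tendsto_id
    simpa using (htail.comp hcomp).const_mul (1 + C*l)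
  have key : ∀ᶠ x in atTop, x * ‖f x‖ ≤ (1 + C*l) * ∫ t in Set.Ioi (x/l), ‖f t‖ := by
    filter_upwards [eventually_gt_atTop (max (ε*l) 1)] with x hx
    have hx1 : (1:ℝ) < x := lt_of_le_of_lt (le_max_right _ _) hx
    have hx0 : (0:ℝ) < x := by linarith
    have hεl : ε * l < x := lt_of_le_of_lt (le_max_left _ _) hx
    have hεxl : ε < x / l := (lt_div_iff₀ hl0).2 (by linarith [mul_comm ε l])
    have hεx : ε < x := by nlinarith
    have hxl : x / l < x := by
      rw [div_lt_iff₀ hl0]; nlinarith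
    -- the set s
    have hsub : Set.Icc x (2*x) ⊆ Set.Ioi ε := fun t ht => lt_of_lt_of_le hεx ht.1
    have hints : IntegrableOn (fun t => ‖f t‖) (Set.Icc x (2*x)) volume :=
      hnormint.mono_set hsub
    have hVne : eVariationOn f (Set.Icc x (2*x)) ≠ ⊤ := hfin x (2*x) hx0
    set V := (eVariationOn f (Set.Icc x (2*x))).toReal with hVdef
    have hptw : ∀ t ∈ Set.Icc x (2*x), ‖f x‖ ≤ ‖f t‖ + V := by
      intro t ht
      have hmem : x ∈ Set.Icc x (2*x) := ⟨le_rfl, by linarith⟩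
      have h1 : edist (f x) (f t) ≤ eVariationOn f (Set.Icc x (2*x)) :=
        eVariationOn.edist_le f hmem ht
      have h2 : dist (f x) (f t) ≤ V := by
        rw [dist_edist]; exact ENNReal.toReal_mono hVne h1
      rw [dist_eq_norm] at h2
      calc ‖f x‖ ≤ ‖f t‖ + ‖f x - f t‖ := by
            have := norm_sub_norm_le (f x) (f t); linarith
        _ ≤ ‖f t‖ + V := by linarith
    have hμs : (volume (Set.Icc x (2*x))).toReal = x := by
      rw [Real.volume_Icc, ENNReal.toReal_ofReal (by linarith)]; ring
    have hconst : ∀ c : ℝ, ∫ _ in Set.Icc x (2*x), c = x * c := by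
      intro c; rw [setIntegral_const, measureReal_def, hμs, smul_eq_mul]
    have hmono1 : x * ‖f x‖ ≤ ∫ t in Set.Icc x (2*x), (‖f t‖ + V) := by
      rw [← hconst (‖f x‖)]
      exact setIntegral_mono_on (integrableOn_const (by
        rw [Real.volume_Icc]; exact ENNReal.ofReal_ne_top))
        (hints.add (integrableOn_const (by
          rw [Real.volume_Icc]; exact ENNReal.ofReal_ne_top)))
        measurableSet_Icc hptw
    have hsplit : ∫ t in Set.Icc x (2*x), (‖f t‖ + V) =
        (∫ t in Set.Icc x (2*x), ‖f t‖) + x * V := by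
      rw [integral_add hints (integrableOn_const (by
        rw [Real.volume_Icc]; exact ENNReal.ofReal_ne_top)), hconst V]
    -- bound on V
    set I := ∫ t in Set.Ioo (x/l) (l*x), ‖f t‖ / t with hIdef
    have hI0 : 0 ≤ I := by
      apply setIntegral_nonneg measurableSet_Ioo
      intro t ht
      have ht0 : 0 < t := lt_trans (by positivity) ht.1
      positivity
    have hVle : V ≤ C * I := by
      have h := hGM x hx0
      have := ENNReal.toReal_mono (ENNReal.ofReal_ne_top) h
      rwa [ENNReal.toReal_ofReal (mul_nonneg hC.le hI0)] at this
    -- Ioo subset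
    have hIooIoi : Set.Ioo (x/l) (l*x) ⊆ Set.Ioi (x/l) := Set.Ioo_subset_Ioi_self
    have hIoiSub : Set.Ioi (x/l) ⊆ Set.Ioi ε := Set.Ioi_subset_Ioi hεxl.le
    have hintIoi : IntegrableOn (fun t => ‖f t‖) (Set.Ioi (x/l)) volume :=
      hnormint.mono_set hIoiSub
    have hintIoo : IntegrableOn (fun t => ‖f t‖) (Set.Ioo (x/l) (l*x)) volume :=
      hintIoi.mono_set hIooIoi
    set J := ∫ t in Set.Ioo (x/l) (l*x), ‖f t‖ with hJdef
    set T := ∫ t in Set.Ioi (x/l), ‖f t‖ with hTdef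
    have hIle : I ≤ (l/x) * J := by
      have hbd : ∀ t ∈ Set.Ioo (x/l) (l*x), ‖f t‖ / t ≤ ‖f t‖ * (l/x) := by
        intro t ht
        have ht0 : 0 < t := lt_trans (by positivity) ht.1
        rw [div_le_iff₀ ht0]
        have h1 : 1 ≤ l/x * t := by
          rw [div_mul_eq_mul_div, le_div_iff₀ hx0, one_mul]
          have h2 := (div_lt_iff₀ hl0).mp ht.1
          nlinarith
        nlinarith [norm_nonneg (f t)]
      have hintg : IntegrableOn (fun t => ‖f t‖ / t) (Set.Ioo (x/l) (l*x)) volume := by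
        apply Integrable.mono' (hintIoo.mul_const (l/x))
        · exact (hintIoo.aemeasurable.div aemeasurable_id).aestronglyMeasurable
        · rw [ae_restrict_iff' measurableSet_Ioo]
          apply ae_of_all
          intro t ht
          have ht0 : 0 < t := lt_trans (by positivity) ht.1
          rw [Real.norm_eq_abs, abs_of_nonneg (by positivity)]
          exact hbd t ht
      have := setIntegral_mono_on hintg (hintIoo.mul_const (l/x)) measurableSet_Ioo hbd
      rw [integral_mul_const] at this
      linarith [this]
    have hJle : J ≤ T := by
      apply setIntegral_mono_set hintIoi
      · exact ae_of_all _ (fun t => norm_nonneg _)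
      · exact HasSubset.Subset.eventuallyLE hIooIoi
    have hJ0 : 0 ≤ J := setIntegral_nonneg measurableSet_Ioo (fun t _ => norm_nonneg _)
    have hT0 : 0 ≤ T := le_trans hJ0 hJle
    have hIccle : ∫ t in Set.Icc x (2*x), ‖f t‖ ≤ T := by
      apply setIntegral_mono_set hintIoi
      · exact ae_of_all _ (fun t => norm_nonneg _)
      · exact HasSubset.Subset.eventuallyLE (fun t ht => lt_of_lt_of_le hxl ht.1)
    -- combine
    have hxV : x * V ≤ C * l * J := by
      have h1 : x * V ≤ x * (C * I) := by nlinarith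
      have h2 : x * (C * I) ≤ x * (C * ((l/x) * J)) := by
        have := mul_le_mul_of_nonneg_left hIle (mul_pos hx0 hC).le
        nlinarith [this]
      have h3 : x * (C * ((l/x) * J)) = C * l * J := by field_simp
      linarith
    calc x * ‖f x‖ ≤ (∫ t in Set.Icc x (2*x), ‖f t‖) + x * V := by
          rw [← hsplit]; exact hmono1
      _ ≤ T + C * l * T := by
          have := mul_le_mul_of_nonneg_left hJle (mul_pos hC hl0).le
          linarith [hxV, hIccle, this]
      _ = (1 + C*l) * T := by ring
  have hnn : ∀ᶠ x : ℝ in atTop, 0 ≤ x * ‖f x‖ := by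
    filter_upwards [eventually_ge_atTop (0:ℝ)] with x hx
    positivity
  have hsq : Tendsto (fun x : ℝ => x * ‖f x‖) atTop (nhds 0) := squeeze_zero' hnn key htail'
  rw [tendsto_zero_iff_norm_tendsto_zero]
  apply hsq.congr'
  filter_upwards [eventually_ge_atTop (0:ℝ)] with x hx
  simp [norm_mul, Complex.norm_real, abs_of_nonneg hx]
end

section
/- (Hardy's inequality, second form.) Let 1 ≤ q < ∞ and σ > 0. Then for every measurable f : (0,∞) → ℂ, ∫_0^∞ ( y^{σ} ∫_y^∞ |f(x)| dx/x )^q dy/y ≤ C ∫_0^∞ ( x^{σ} |f(x)| )^q dx/x, with C depending only on q and σ. -/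
open MeasureTheory Set Filter
open scoped ENNReal NNReal

-- Lemma A
lemma lintA {b : ℝ} (hb : b < -1) {c : ℝ} (hc : 0 < c) :
    ∫⁻ x in Ioi c, ENNReal.ofReal (x ^ b) = ENNReal.ofReal (c ^ (b+1) / (-(b+1))) := by
  rw [← ofReal_integral_eq_lintegral_ofReal (integrableOn_Ioi_rpow_of_lt hb hc)
    (ae_restrict_of_forall_mem measurableSet_Ioi fun x hx =>
      Real.rpow_nonneg (le_of_lt (hc.trans hx)) b)]
  rw [integral_Ioi_rpow_of_lt hb hc]
  congr 1; rw [div_neg, neg_div]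

-- Lemma B
lemma lintB {e : ℝ} (he : -1 < e) {x : ℝ} (hx : 0 < x) :
    ∫⁻ y in Ioo (0:ℝ) x, ENNReal.ofReal (y ^ e) = ENNReal.ofReal (x ^ (e+1) / (e+1)) := by
  have hint : IntegrableOn (fun y : ℝ => y ^ e) (Ioo 0 x) := by
    have := (intervalIntegral.intervalIntegrable_rpow' (a := 0) (b := x) he)
    rw [intervalIntegrable_iff] at this
    exact (this.mono_set (by rw [uIoc_of_le hx.le]; exact Ioo_subset_Ioc_self)) 
  rw [← ofReal_integral_eq_lintegral_ofReal hint
    (ae_restrict_of_forall_mem measurableSet_Ioo fun y hy =>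
      Real.rpow_nonneg (le_of_lt hy.1) e)]
  congr 1
  rw [← integral_Ioc_eq_integral_Ioo, ← intervalIntegral.integral_of_le hx.le,
    integral_rpow (Or.inl he), Real.zero_rpow (by linarith), sub_zero]

-- Lemma C: Tonelli swap
lemma lintSwap {e : ℝ} (he : -1 < e) (H : ℝ → ℝ≥0∞) (hH : Measurable H) :
    ∫⁻ y in Ioi (0:ℝ), ENNReal.ofReal (y ^ e) * ∫⁻ x in Ioi y, H x
      = ENNReal.ofReal (1/(e+1)) * ∫⁻ x in Ioi (0:ℝ), ENNReal.ofReal (x ^ (e+1)) * H x := by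
  set W : ℝ → ℝ → ℝ≥0∞ := fun x y => if 0 < y ∧ y < x then ENNReal.ofReal (y ^ e) * H x else 0
    with hW
  have hWmeas : Measurable (Function.uncurry W) := by
    apply Measurable.ite
    · exact (measurableSet_lt measurable_const measurable_snd).inter
        (measurableSet_lt measurable_snd measurable_fst)
    · fun_prop
    · exact measurable_const
  have key : ∫⁻ y, ∫⁻ x, W x y = ∫⁻ x, ∫⁻ y, W x y := by
    rw [← lintegral_lintegral_swap hWmeas.aemeasurable]
  have hL : ∫⁻ y in Ioi (0:ℝ), ENNReal.ofReal (y ^ e) * ∫⁻ x in Ioi y, H x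
      = ∫⁻ y, ∫⁻ x, W x y := by
    have h1 : ∀ y : ℝ, (∫⁻ x, W x y) =
        (Ioi (0:ℝ)).indicator (fun y => ENNReal.ofReal (y ^ e) * ∫⁻ x in Ioi y, H x) y := by
      intro y
      by_cases hy : 0 < y
      · rw [indicator_of_mem (mem_Ioi.mpr hy)]
        have : ∀ x, W x y = (Ioi y).indicator (fun x => ENNReal.ofReal (y ^ e) * H x) x := by
          intro x
          by_cases hx : y < x
          · rw [indicator_of_mem (mem_Ioi.mpr hx), hW]; simp [hy, hx]
          · rw [indicator_of_notMem (fun h => hx (mem_Ioi.mp h)), hW]; simp [hx]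
        simp_rw [this]
        rw [lintegral_indicator measurableSet_Ioi, lintegral_const_mul _ hH]
      · rw [indicator_of_notMem (fun h => hy (mem_Ioi.mp h))]
        have : ∀ x, W x y = 0 := by
          intro x; rw [hW]; simp [hy]
        simp [this]
    simp_rw [h1]
    rw [lintegral_indicator measurableSet_Ioi]
  have hR : ∫⁻ x, ∫⁻ y, W x y
      = ∫⁻ x in Ioi (0:ℝ), H x * ENNReal.ofReal (x ^ (e+1) / (e+1)) := by
    have h1 : ∀ x : ℝ, (∫⁻ y, W x y) =
        (Ioi (0:ℝ)).indicator (fun x => H x * ENNReal.ofReal (x ^ (e+1) / (e+1))) x := by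
      intro x
      by_cases hx : 0 < x
      · rw [indicator_of_mem (mem_Ioi.mpr hx)]
        have : ∀ y, W x y = (Ioo (0:ℝ) x).indicator (fun y => ENNReal.ofReal (y ^ e) * H x) y := by
          intro y
          by_cases hy : 0 < y ∧ y < x
          · rw [indicator_of_mem (mem_Ioo.mpr hy), hW]; simp [hy.1, hy.2]
          · rw [indicator_of_notMem (fun h => hy (mem_Ioo.mp h)), hW]; simp [hy]
        simp_rw [this]
        rw [lintegral_indicator measurableSet_Ioo]
        rw [lintegral_mul_const _ (by fun_prop), lintB he hx,
          mul_comm]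
      · rw [indicator_of_notMem (fun h => hx (mem_Ioi.mp h))]
        have : ∀ y, W x y = 0 := by
          intro y; rw [hW]
          have : ¬ (0 < y ∧ y < x) := by rintro ⟨h1, h2⟩; exact hx (h1.trans h2)
          simp [this]
        simp [this]
    simp_rw [h1]
    rw [lintegral_indicator measurableSet_Ioi]
  rw [hL, key, hR, ← lintegral_const_mul _ (by fun_prop)]
  apply setLIntegral_congr_fun measurableSet_Ioi
  intro x hx
  beta_reduce
  rw [div_eq_mul_inv, ENNReal.ofReal_mul (Real.rpow_nonneg (le_of_lt (mem_Ioi.mp hx)) _), one_div]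
  ring

theorem stmt14 (q σ : ℝ) (hq : 1 ≤ q) (hσ : 0 < σ) :
    ∃ c : ℝ, 0 < c ∧ ∀ f : ℝ → ℂ, Measurable f →
      (∫⁻ y in Set.Ioi (0 : ℝ),
          (ENNReal.ofReal (y ^ σ) *
            ∫⁻ x in Set.Ioi y, ENNReal.ofReal ‖f x‖ / ENNReal.ofReal x) ^ q /
          ENNReal.ofReal y) ≤
      ENNReal.ofReal c *
        ∫⁻ x in Set.Ioi (0 : ℝ),
          (ENNReal.ofReal (x ^ σ) * ENNReal.ofReal ‖f x‖) ^ q / ENNReal.ofReal x := by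
  rcases eq_or_lt_of_le hq with hq1 | hq1
  · subst hq1
    refine ⟨1/σ, by positivity, ?_⟩
    intro f hf
    set g : ℝ → ℝ≥0∞ := fun x => ENNReal.ofReal ‖f x‖ with hg
    have hgm : Measurable g := hf.norm.ennreal_ofReal
    have hH : Measurable (fun x => g x / ENNReal.ofReal x) := by fun_prop
    simp only [ENNReal.rpow_one]
    have step1 : (∫⁻ y in Ioi (0:ℝ),
        (ENNReal.ofReal (y ^ σ) * ∫⁻ x in Ioi y, g x / ENNReal.ofReal x) / ENNReal.ofReal y)
        = ∫⁻ y in Ioi (0:ℝ),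
          ENNReal.ofReal (y ^ (σ-1)) * ∫⁻ x in Ioi y, g x / ENNReal.ofReal x := by
      apply setLIntegral_congr_fun measurableSet_Ioi
      intro y hy
      have hy0 : (0:ℝ) < y := hy
      have hyr : y ^ σ * y⁻¹ = y ^ (σ - 1) := by
        rw [← Real.rpow_neg_one y, ← Real.rpow_add hy0]; ring_nf
      beta_reduce
      rw [div_eq_mul_inv, ← ENNReal.ofReal_inv_of_pos hy0, mul_right_comm,
        ← ENNReal.ofReal_mul (Real.rpow_nonneg hy0.le _), hyr]
    rw [step1, lintSwap (by linarith) _ hH, sub_add_cancel]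
    apply le_of_eq
    congr 1
    apply setLIntegral_congr_fun measurableSet_Ioi
    intro x hx
    beta_reduce
    rw [mul_div_assoc]
  · have hq0 : 0 < q := by linarith
    have hqne : q ≠ 0 := hq0.ne'
    set q' := Real.conjExponent q with hq'def
    have hconj : q.HolderConjugate q' := Real.HolderConjugate.conjExponent hq1
    have hq'0 : 0 < q' := hconj.symm.pos
    have hq'ne : q' ≠ 0 := hq'0.ne'
    have hinv : q⁻¹ + q'⁻¹ = 1 := hconj.inv_add_inv_eq_one
    set a : ℝ := σ/2 - 1/q with ha
    set b : ℝ := -a - 1 with hb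
    have hbq' : b * q' = -(σ*q'/2) - 1 := by
      have hbe : b = -(σ/2) - 1/q' := by
        rw [hb, ha, one_div, one_div]; linarith
      rw [hbe]; field_simp
    have hσq' : 0 < σ * q' / 2 := by positivity
    have hblt : b * q' < -1 := by rw [hbq']; linarith
    have hbq1 : b * q' + 1 = -(σ*q'/2) := by rw [hbq']; ring
    set K : ℝ := (2/(σ*q'))^(1/q') with hK
    have hKpos : 0 < K := Real.rpow_pos_of_pos (by positivity) _
    set e : ℝ := σ*q/2 - 1 with he
    have hσq : 0 < σ * q / 2 := by positivity
    have hee : -1 < e := by rw [he]; linarith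
    have he1 : e + 1 = σ*q/2 := by ring
    have haq : a * q = σ*q/2 - 1 := by
      rw [ha]; field_simp
    refine ⟨K^q * (2/(σ*q)), by positivity, ?_⟩
    intro f hf
    set g : ℝ → ℝ≥0∞ := fun x => ENNReal.ofReal ‖f x‖ with hg
    have hgm : Measurable g := hf.norm.ennreal_ofReal
    set u : ℝ → ℝ≥0∞ := fun x => g x * ENNReal.ofReal (x ^ a) with hu
    set v : ℝ → ℝ≥0∞ := fun x => ENNReal.ofReal (x ^ b) with hv
    have hum : Measurable u := by
      apply hgm.mul; fun_prop
    have hvm : Measurable v := by fun_prop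
    set I1 : ℝ → ℝ≥0∞ := fun y => ∫⁻ x in Ioi y, (u x) ^ q with hI1
    have inner_le : ∀ y : ℝ, 0 < y →
        (∫⁻ x in Ioi y, g x / ENNReal.ofReal x)
          ≤ I1 y ^ (1/q) * ENNReal.ofReal (y ^ (-(σ/2)) * K) := by
      intro y hy
      have heq : (∫⁻ x in Ioi y, g x / ENNReal.ofReal x) = ∫⁻ x in Ioi y, (u * v) x := by
        apply setLIntegral_congr_fun measurableSet_Ioi
        intro x hx
        have hx0 : 0 < x := lt_trans hy hx
        have hxx : x ^ a * x ^ b = x⁻¹ := by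
          rw [← Real.rpow_add hx0, hb, show a + (-a - 1) = -1 by ring, Real.rpow_neg_one]
        show g x / ENNReal.ofReal x = u x * v x
        rw [hu, hv, div_eq_mul_inv, ← ENNReal.ofReal_inv_of_pos hx0, ← hxx,
          ENNReal.ofReal_mul (Real.rpow_nonneg hx0.le _), ← mul_assoc]
      rw [heq]
      calc ∫⁻ x in Ioi y, (u * v) x
          ≤ (∫⁻ x in Ioi y, u x ^ q) ^ (1/q) * (∫⁻ x in Ioi y, v x ^ q') ^ (1/q') :=
            ENNReal.lintegral_mul_le_Lp_mul_Lq _ hconj hum.aemeasurable hvm.aemeasurable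
        _ = I1 y ^ (1/q) * ENNReal.ofReal (y ^ (-(σ/2)) * K) := by
            congr 1
            have hI2 : (∫⁻ x in Ioi y, v x ^ q')
                = ENNReal.ofReal (y ^ (b*q'+1) / (-(b*q'+1))) := by
              rw [← lintA hblt hy]
              apply setLIntegral_congr_fun measurableSet_Ioi
              intro x hx
              have hx0 : 0 < x := lt_trans hy hx
              beta_reduce
              rw [hv, ENNReal.ofReal_rpow_of_pos (Real.rpow_pos_of_pos hx0 _),
                ← Real.rpow_mul hx0.le]
            rw [hI2]
            have hr : 0 < y ^ (b*q'+1) / (-(b*q'+1)) := by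
              apply div_pos (Real.rpow_pos_of_pos hy _)
              rw [hbq1]; linarith
            rw [ENNReal.ofReal_rpow_of_pos hr]
            congr 1
            rw [hbq1, neg_neg, div_eq_mul_inv, inv_div,
              Real.mul_rpow (Real.rpow_nonneg hy.le _) (by positivity),
              ← Real.rpow_mul hy.le, hK]
            congr 2
            field_simp
    have main : ∀ y ∈ Ioi (0:ℝ),
        (ENNReal.ofReal (y ^ σ) * ∫⁻ x in Ioi y, g x / ENNReal.ofReal x) ^ q / ENNReal.ofReal y
          ≤ ENNReal.ofReal (K ^ q) * (ENNReal.ofReal (y ^ e) * I1 y) := by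
      intro y hy
      have hy0 : (0:ℝ) < y := hy
      have step := inner_le y hy0
      have mono1 : (ENNReal.ofReal (y ^ σ) * ∫⁻ x in Ioi y, g x / ENNReal.ofReal x) ^ q
            / ENNReal.ofReal y
          ≤ (ENNReal.ofReal (y ^ σ)
              * (I1 y ^ (1/q) * ENNReal.ofReal (y ^ (-(σ/2)) * K))) ^ q / ENNReal.ofReal y := by
        gcongr
      refine le_trans mono1 (le_of_eq ?_)
      have hA : ENNReal.ofReal (y^σ) ^ q = ENNReal.ofReal (y^(σ*q)) := by
        rw [ENNReal.ofReal_rpow_of_pos (Real.rpow_pos_of_pos hy0 _), ← Real.rpow_mul hy0.le]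
      have hB : (I1 y ^ (1/q)) ^ q = I1 y := by
        rw [← ENNReal.rpow_mul, one_div, inv_mul_cancel₀ hqne, ENNReal.rpow_one]
      have hC : (ENNReal.ofReal (y^(-(σ/2)) * K)) ^ q
          = ENNReal.ofReal (y^(-(σ*q/2)) * K^q) := by
        rw [ENNReal.ofReal_rpow_of_pos (by positivity),
          Real.mul_rpow (Real.rpow_nonneg hy0.le _) hKpos.le,
          ← Real.rpow_mul hy0.le, show -(σ/2)*q = -(σ*q/2) by ring]
      rw [ENNReal.mul_rpow_of_nonneg _ _ hq0.le, ENNReal.mul_rpow_of_nonneg _ _ hq0.le,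
        hA, hB, hC, div_eq_mul_inv, ← ENNReal.ofReal_inv_of_pos hy0]
      have hyexp : y^(σ*q) * (y^(-(σ*q/2)) * K^q) * y⁻¹ = K^q * y^e := by
        rw [← Real.rpow_neg_one y]
        have : y^(σ*q) * (y^(-(σ*q/2)) * K^q) * y^(-1:ℝ)
            = (y^(σ*q) * y^(-(σ*q/2)) * y^(-1:ℝ)) * K^q := by ring
        rw [this, ← Real.rpow_add hy0, ← Real.rpow_add hy0,
          show σ*q + -(σ*q/2) + (-1:ℝ) = e by rw [he]; ring]
        ring
      have hcomb : ENNReal.ofReal (y^(σ*q))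
          * (ENNReal.ofReal (y^(-(σ*q/2)) * K^q) * ENNReal.ofReal y⁻¹)
          = ENNReal.ofReal (K^q) * ENNReal.ofReal (y^e) := by
        rw [← ENNReal.ofReal_mul (by positivity), ← ENNReal.ofReal_mul (Real.rpow_nonneg hy0.le _),
          ← ENNReal.ofReal_mul (Real.rpow_nonneg hKpos.le _)]
        congr 1
        rw [← hyexp]; ring
      rw [← mul_assoc (ENNReal.ofReal (K ^ q)), ← hcomb]
      ring
    have hHm : Measurable (fun x => (u x) ^ q) := hum.pow_const _
    calc (∫⁻ y in Ioi (0:ℝ),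
          (ENNReal.ofReal (y ^ σ) * ∫⁻ x in Ioi y, g x / ENNReal.ofReal x) ^ q
            / ENNReal.ofReal y)
        ≤ ∫⁻ y in Ioi (0:ℝ), ENNReal.ofReal (K ^ q) * (ENNReal.ofReal (y ^ e) * I1 y) :=
          setLIntegral_mono' measurableSet_Ioi main
      _ = ENNReal.ofReal (K ^ q) * ∫⁻ y in Ioi (0:ℝ), ENNReal.ofReal (y ^ e) * I1 y :=
          lintegral_const_mul' _ _ ENNReal.ofReal_ne_top
      _ = ENNReal.ofReal (K ^ q) * (ENNReal.ofReal (1/(e+1))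
            * ∫⁻ x in Ioi (0:ℝ), ENNReal.ofReal (x ^ (e+1)) * (u x) ^ q) := by
          rw [lintSwap hee _ hHm]
      _ = ENNReal.ofReal (K^q * (2/(σ*q)))
            * ∫⁻ x in Ioi (0:ℝ),
              (ENNReal.ofReal (x ^ σ) * g x) ^ q / ENNReal.ofReal x := by
          rw [← mul_assoc, ← ENNReal.ofReal_mul (by positivity)]
          congr 1
          · rw [he1, one_div, inv_div]
          · apply setLIntegral_congr_fun measurableSet_Ioi
            intro x hx
            have hx0 : 0 < x := hx
            have hL : ENNReal.ofReal (x ^ (e+1)) * (u x) ^ q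
                = ENNReal.ofReal (x ^ (σ*q - 1)) * g x ^ q := by
              rw [hu, ENNReal.mul_rpow_of_nonneg _ _ hq0.le,
                ENNReal.ofReal_rpow_of_pos (Real.rpow_pos_of_pos hx0 _),
                ← Real.rpow_mul hx0.le, ← mul_assoc, mul_comm (ENNReal.ofReal _) (g x ^ q),
                mul_assoc, ← ENNReal.ofReal_mul (Real.rpow_nonneg hx0.le _),
                ← Real.rpow_add hx0, show e + 1 + a*q = σ*q - 1 by rw [he1, haq]; ring]
              ring
            have hR : (ENNReal.ofReal (x ^ σ) * g x) ^ q / ENNReal.ofReal x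
                = ENNReal.ofReal (x ^ (σ*q - 1)) * g x ^ q := by
              rw [ENNReal.mul_rpow_of_nonneg _ _ hq0.le,
                ENNReal.ofReal_rpow_of_pos (Real.rpow_pos_of_pos hx0 _),
                ← Real.rpow_mul hx0.le, div_eq_mul_inv, ← ENNReal.ofReal_inv_of_pos hx0,
                ← Real.rpow_neg_one x, mul_right_comm,
                ← ENNReal.ofReal_mul (Real.rpow_nonneg hx0.le _), ← Real.rpow_add hx0,
                show σ*q + (-1:ℝ) = σ*q - 1 by ring]
            beta_reduce
            rw [hL, hR]
end
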